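/- (Inner-loop telescoping estimate.) Let m ≥ 1 be an integer, c ≥ 0 a real number, and set τ_k := 2/(k + 2) for k = 0, 1, …, m − 1 (so τ_0 = 1). Suppose D_0, D_1, …, D_m and E_0, E_1, …, E_m are nonnegative reals satisfying, for every 0 ≤ k ≤ m − 1, (1/τ_k²)·D_{k+1} + E_{k+1} ≤ ((1 − τ_k)/τ_k²)·D_k + E_k + c/τ_k. Then D_m + (4/(m + 1)²)·E_m ≤ (4/(m + 1)²)·E_0 + (m(m + 3)/(m + 1)²)·c. -/

import Mathlib

noncomputable section

/-- `τ_k = 2/(k + 2)`. -/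
def tauSeq (k : ℕ) : ℝ := 2 / ((k : ℝ) + 2)

lemma tau_inv_sq (k : ℕ) : 1 / tauSeq k ^ 2 = ((k : ℝ) + 2) ^ 2 / 4 := by
  have h : (0:ℝ) < (k : ℝ) + 2 := by positivity
  rw [tauSeq]; field_simp; ring

lemma tau_coef (k : ℕ) : (1 - tauSeq k) / tauSeq k ^ 2 = (k : ℝ) * ((k : ℝ) + 2) / 4 := by
  have h : (0:ℝ) < (k : ℝ) + 2 := by positivity
  rw [tauSeq]; field_simp; ring

lemma tau_div (c : ℝ) (k : ℕ) : c / tauSeq k = c * ((k : ℝ) + 2) / 2 := by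
  have h : (0:ℝ) < (k : ℝ) + 2 := by positivity
  rw [tauSeq]; field_simp

/-- inner-loop telescoping estimate. -/
theorem stmt14 (m : ℕ) (hm : 1 ≤ m) (c : ℝ) (hc : 0 ≤ c)
    (D E : ℕ → ℝ)
    (hD : ∀ k ≤ m, 0 ≤ D k) (hE : ∀ k ≤ m, 0 ≤ E k)
    (hrec : ∀ k < m,
      (1 / tauSeq k ^ 2) * D (k + 1) + E (k + 1) ≤
        ((1 - tauSeq k) / tauSeq k ^ 2) * D k + E k + c / tauSeq k) :
    D m + (4 / ((m : ℝ) + 1) ^ 2) * E m ≤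
      (4 / ((m : ℝ) + 1) ^ 2) * E 0 + ((m : ℝ) * ((m : ℝ) + 3) / ((m : ℝ) + 1) ^ 2) * c := by
  have hrec' : ∀ k < m, (((k:ℝ) + 2) ^ 2 / 4) * D (k + 1) + E (k + 1) ≤
      ((k:ℝ) * ((k:ℝ) + 2) / 4) * D k + E k + c * ((k:ℝ) + 2) / 2 := by
    intro k hk
    have h := hrec k hk
    rwa [tau_inv_sq, tau_coef, tau_div] at h
  have key : ∀ n, 1 ≤ n → n ≤ m →
      (((n:ℝ) + 1) ^ 2 / 4) * D n + E n ≤ E 0 + ((n:ℝ) * ((n:ℝ) + 3) / 4) * c := by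
    intro n h1
    induction n, h1 using Nat.le_induction with
    | base =>
      intro _
      have h := hrec' 0 (by omega)
      push_cast at h ⊢
      nlinarith
    | succ n hn ih =>
      intro hnm
      have h := hrec' n (by omega)
      have ihh := ih (by omega)
      have hDn := hD n (by omega)
      push_cast at h ⊢
      nlinarith [mul_nonneg hc (by positivity : (0:ℝ) ≤ (n:ℝ))]
  have hfin := key m hm le_rfl
  have hp : (0:ℝ) < ((m:ℝ) + 1) ^ 2 := by positivity
  have hq : (0:ℝ) ≤ 4 / ((m:ℝ) + 1) ^ 2 := by positivity
  calc D m + (4 / ((m:ℝ) + 1) ^ 2) * E m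
      = (4 / ((m:ℝ) + 1) ^ 2) * ((((m:ℝ) + 1) ^ 2 / 4) * D m + E m) := by
        field_simp
    _ ≤ (4 / ((m:ℝ) + 1) ^ 2) * (E 0 + ((m:ℝ) * ((m:ℝ) + 3) / 4) * c) :=
        mul_le_mul_of_nonneg_left hfin hq
    _ = (4 / ((m:ℝ) + 1) ^ 2) * E 0 + ((m:ℝ) * ((m:ℝ) + 3) / ((m:ℝ) + 1) ^ 2) * c := by
        field_simp

end
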